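/- Let D be a finite set of forbidden patterns such that every pattern in D contains at least two nonzero symbols. Then cap(D) > 0. -/

import Mathlib

/-- The integer value of a binary symbol. -/
def boolToInt (b : Bool) : ℤ := if b then 1 else 0

/-- Componentwise difference of two binary words, a word over `{-1, 0, +1}`. -/
def diffWord (u v : List Bool) : List ℤ :=
  List.zipWith (fun a b => boolToInt a - boolToInt b) u v

/-- A forbidden pattern: a nonempty finite word over the alphabet `{-1, 0, +1}`. -/
def IsPattern (p : List ℤ) : Prop :=
  p ≠ [] ∧ ∀ x ∈ p, x = -1 ∨ x = 0 ∨ x = 1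

/-- A code `C` of binary words avoids the forbidden set `D` if no difference of two
distinct code words contains a pattern of `D` as a contiguous subword (factor). -/
def AvoidsCode (D : Finset (List ℤ)) (C : Finset (List Bool)) : Prop :=
  ∀ u ∈ C, ∀ v ∈ C, u ≠ v → ∀ p ∈ D, ¬ p <:+: diffWord u v

/-- `delta D n` : the maximal cardinality of a code of binary words of length `n`
avoiding the forbidden set `D`. -/
noncomputable def delta (D : Finset (List ℤ)) (n : ℕ) : ℕ :=
  sSup {k : ℕ | ∃ C : Finset (List Bool),
    (∀ u ∈ C, u.length = n) ∧ AvoidsCode D C ∧ C.card = k}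

/-- The capacity of a set of forbidden difference patterns. -/
noncomputable def cap (D : Finset (List ℤ)) : ℝ :=
  Filter.limsup (fun n : ℕ => Real.logb 2 (delta D n) / n) Filter.atTop


/-!
Spread every bit of a free binary word of length `k` by `L` zero bits, where `L` bounds the
lengths of the patterns of `D`. The difference of two spread words is the spread of their
difference, so each of its factors of length at most `L` has at most one nonzero symbol and
is not a pattern of `D`. The `2 ^ k` spread words therefore form a code of length `k (L + 1)`
avoiding `D`, whence `cap D ≥ 1 / (L + 1)`.
-/

namespace List

variable {α β γ : Type*}

def spread (z : α) (L : ℕ) (l : List α) : List α :=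
  l.flatMap fun a => a :: replicate L z

variable {z : α} {L : ℕ}

@[simp]
theorem spread_nil : spread z L [] = [] := rfl

@[simp]
theorem spread_cons (a : α) (l : List α) :
    spread z L (a :: l) = a :: (replicate L z ++ spread z L l) := by
  simp [spread]

@[simp]
theorem length_spread (l : List α) : (spread z L l).length = l.length * (L + 1) := by
  induction l with
  | nil => simp
  | cons a l ih => simp [ih]; ring

theorem spread_injective : Function.Injective (spread z L) := by
  intro l l' h
  induction l generalizing l' with
  | nil => cases l' <;> simp_all
  | cons a l ih =>
    cases l' with
    | nil => simp at h
    | cons b l' =>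
      simp only [spread_cons, cons.injEq, append_cancel_left_eq] at h
      rw [h.1, ih h.2]

theorem zipWith_spread (f : α → β → γ) (x : α) (y : β) (u : List α) (v : List β) :
    zipWith f (spread x L u) (spread y L v) = spread (f x y) L (zipWith f u v) := by
  induction u generalizing v with
  | nil => simp
  | cons a u ih =>
    cases v with
    | nil => simp
    | cons b v =>
      simp [zipWith_append, zipWith_replicate', ih]

theorem countP_eq_zero_of_subset_replicate {p : α → Bool} (hz : p z = false) {q : List α}
    {n : ℕ} (hq : q ⊆ replicate n z) : q.countP p = 0 :=
  countP_eq_zero.2 fun _ hx => by rw [eq_of_mem_replicate (hq hx), hz]; simp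

/-- The leading `replicate m z` lets the induction pass through the gaps between symbols. -/
theorem countP_le_one_of_infix_spread {p : α → Bool} (hz : p z = false) (l : List α) :
    ∀ (m : ℕ) (q : List α), q <:+: replicate m z ++ spread z L l → q.length ≤ L →
      q.countP p ≤ 1 := by
  induction l with
  | nil =>
    intro m q hq _
    simp only [spread_nil, append_nil] at hq
    simp [countP_eq_zero_of_subset_replicate hz hq.subset]
  | cons a l ih =>
    intro m
    induction m with
    | zero =>
      intro q hq hlen
      rw [replicate_zero, nil_append, spread_cons] at hq
      rcases infix_cons_iff.mp hq with hpre | hinf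
      · cases q with
        | nil => simp
        | cons b q' =>
          have hq' : q' <+: replicate L z :=
            prefix_of_prefix_length_le (cons_prefix_cons.mp hpre).2 (prefix_append _ _)
              (by simp at hlen ⊢; omega)
          have := countP_eq_zero_of_subset_replicate hz hq'.subset
          simp only [countP_cons, this]
          split <;> simp
      · exact ih L q hinf hlen
    | succ m ihm =>
      intro q hq hlen
      rw [replicate_succ, cons_append] at hq
      rcases infix_cons_iff.mp hq with hpre | hinf
      · cases q with
        | nil => simp
        | cons b q' =>
          obtain ⟨rfl, hq'⟩ := cons_prefix_cons.mp hpre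
          simpa [hz] using ihm q' hq'.isInfix (by simp at hlen; omega)
      · exact ihm q hinf hlen

end List

open List

theorem diffWord_spread (L : ℕ) (u v : List Bool) :
    diffWord (spread false L u) (spread false L v) = spread 0 L (diffWord u v) := by
  simpa [diffWord, boolToInt] using
    zipWith_spread (L := L) (fun a b => boolToInt a - boolToInt b) false false u v

theorem card_le_two_pow_of_length_eq {n : ℕ} {C : Finset (List Bool)}
    (h : ∀ u ∈ C, u.length = n) : C.card ≤ 2 ^ n := by
  have hsub : C ⊆ Finset.univ.image fun f : Fin n → Bool => List.ofFn f := by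
    intro u hu
    obtain rfl := h u hu
    exact Finset.mem_image.mpr ⟨u.get, Finset.mem_univ _, List.ofFn_get u⟩
  calc C.card ≤ _ := Finset.card_le_card hsub
    _ ≤ (Finset.univ : Finset (Fin n → Bool)).card := Finset.card_image_le
    _ = 2 ^ n := by simp

theorem delta_le_two_pow (D : Finset (List ℤ)) (n : ℕ) : delta D n ≤ 2 ^ n := by
  apply csSup_le'
  rintro k ⟨C, hlen, -, rfl⟩
  exact card_le_two_pow_of_length_eq hlen

theorem card_le_delta {D : Finset (List ℤ)} {n : ℕ} {C : Finset (List Bool)}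
    (hlen : ∀ u ∈ C, u.length = n) (hC : AvoidsCode D C) : C.card ≤ delta D n :=
  le_csSup ⟨2 ^ n, fun _ ⟨_, hlen', _, hk⟩ => hk ▸ card_le_two_pow_of_length_eq hlen'⟩
    ⟨C, hlen, hC, rfl⟩

noncomputable def spreadCode (L k : ℕ) : Finset (List Bool) :=
  Finset.univ.image fun f : Fin k → Bool => spread false L (List.ofFn f)

theorem card_spreadCode (L k : ℕ) : (spreadCode L k).card = 2 ^ k := by
  rw [spreadCode, Finset.card_image_of_injective _
    fun _ _ h => List.ofFn_injective (spread_injective h)]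
  simp

theorem length_of_mem_spreadCode {L k : ℕ} {u : List Bool} (hu : u ∈ spreadCode L k) :
    u.length = k * (L + 1) := by
  obtain ⟨f, -, rfl⟩ := Finset.mem_image.mp hu
  simp

theorem avoidsCode_spreadCode {D : Finset (List ℤ)} {L : ℕ} (hL : ∀ p ∈ D, p.length ≤ L)
    (h2 : ∀ p ∈ D, 2 ≤ (p.filter (fun x => x ≠ 0)).length) (k : ℕ) :
    AvoidsCode D (spreadCode L k) := by
  intro u hu v hv _ p hp hinf
  obtain ⟨f, -, rfl⟩ := Finset.mem_image.mp hu
  obtain ⟨g, -, rfl⟩ := Finset.mem_image.mp hv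
  rw [diffWord_spread, ← nil_append (spread _ _ _), ← replicate_zero] at hinf
  have hone :=
    countP_le_one_of_infix_spread (p := fun x : ℤ => x ≠ 0) (by simp) _ 0 p hinf (hL p hp)
  have htwo := h2 p hp
  rw [← countP_eq_length_filter] at htwo
  omega

theorem logb_delta_div_le_one (D : Finset (List ℤ)) (n : ℕ) :
    Real.logb 2 (delta D n) / n ≤ 1 := by
  rcases Nat.eq_zero_or_pos (delta D n) with hz | hpos
  · simp [hz]
  refine div_le_one_of_le₀ ?_ n.cast_nonneg
  calc Real.logb 2 (delta D n) ≤ Real.logb 2 ((2 : ℝ) ^ n) :=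
        Real.logb_le_logb_of_le one_lt_two (by exact_mod_cast hpos)
          (by exact_mod_cast delta_le_two_pow D n)
    _ = n := by simp [Real.logb_pow]

theorem inv_succ_le_logb_delta_div {D : Finset (List ℤ)} {L k : ℕ} (hk : 0 < k)
    (hδ : 2 ^ k ≤ delta D (k * (L + 1))) :
    ((L : ℝ) + 1)⁻¹ ≤ Real.logb 2 (delta D (k * (L + 1))) / ↑(k * (L + 1)) := by
  have hlog : (k : ℝ) ≤ Real.logb 2 (delta D (k * (L + 1))) := by
    calc (k : ℝ) = Real.logb 2 ((2 : ℝ) ^ k) := by simp [Real.logb_pow]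
      _ ≤ _ := Real.logb_le_logb_of_le one_lt_two (by positivity) (by exact_mod_cast hδ)
  rw [le_div_iff₀ (by positivity)]
  calc ((L : ℝ) + 1)⁻¹ * ↑(k * (L + 1)) = k := by push_cast; field_simp
    _ ≤ _ := hlog

theorem inv_succ_le_cap {D : Finset (List ℤ)} {L : ℕ}
    (hδ : ∀ k, 2 ^ k ≤ delta D (k * (L + 1))) : ((L : ℝ) + 1)⁻¹ ≤ cap D := by
  refine Filter.le_limsup_of_frequently_le ?_
    (Filter.isBoundedUnder_of ⟨1, logb_delta_div_le_one D⟩)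
  refine Filter.frequently_atTop.2 fun N => ⟨(N + 1) * (L + 1), by nlinarith, ?_⟩
  exact inv_succ_le_logb_delta_div N.succ_pos (hδ _)

theorem positive_capacity_of_two_nonzeros_general (D : Finset (List ℤ))
    (h2 : ∀ p ∈ D, 2 ≤ (p.filter (fun x => x ≠ 0)).length) :
    0 < cap D := by
  set L := D.sup List.length
  have hL : ∀ p ∈ D, p.length ≤ L := fun p hp => Finset.le_sup hp
  have hδ (k : ℕ) : 2 ^ k ≤ delta D (k * (L + 1)) := by
    rw [← card_spreadCode L k]
    exact card_le_delta (fun _ => length_of_mem_spreadCode) (avoidsCode_spreadCode hL h2 k)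
  exact (by positivity : (0 : ℝ) < ((L : ℝ) + 1)⁻¹).trans_le (inv_succ_le_cap hδ)

/-- if every pattern in `D` contains at least two nonzero symbols,
then `cap(D) > 0`. -/
theorem positive_capacity_of_two_nonzeros (D : Finset (List ℤ))
    (hD : ∀ p ∈ D, IsPattern p)
    (h2 : ∀ p ∈ D, 2 ≤ (p.filter (fun x => x ≠ 0)).length) :
    0 < cap D :=
  positive_capacity_of_two_nonzeros_general D h2
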